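/- For every commutative ring A, every family of weights R : ℤ → A, every integer n and every natural number j ≥ 1, the following inversion identity holds: −∏_{ℓ=1}^{j} R_{n−ℓ} = Σ_{i=0}^{j} (−1)^{i−1} · Π_{n−j,n+j−1}(i) · Z_{n−1,n−1}(2j−2i). -/

import Mathlib

open Finset

variable {A : Type*} [CommRing A]

/-- End height of a walk starting at a given height, with steps given by a list of
Booleans (`true` = ascending step `+1`, `false` = descending step `-1`). -/
def walkEnd : ℤ → List Bool → ℤ
  | a, [] => a
  | a, true :: s => walkEnd (a + 1) s
  | a, false :: s => walkEnd (a - 1) s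

/-- Weight of a walk: the product of `R h` over all descending steps `h → h - 1`. -/
def walkWeight (R : ℤ → A) : ℤ → List Bool → A
  | _, [] => 1
  | a, true :: s => walkWeight R (a + 1) s
  | a, false :: s => R a * walkWeight R (a - 1) s

/-- Whether every height visited by the walk (including the first and last) is `≥ c`. -/
def walkAbove (c : ℤ) : ℤ → List Bool → Bool
  | a, [] => decide (c ≤ a)
  | a, true :: s => decide (c ≤ a) && walkAbove c (a + 1) s
  | a, false :: s => decide (c ≤ a) && walkAbove c (a - 1) s

/-- `Zw R a b k`: the generating function of walks of length `k` from height `a` to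
height `b`, each walk weighted by `R h` per descending step from height `h`. -/
def Zw (R : ℤ → A) (a b : ℤ) (k : ℕ) : A :=
  ∑ s : Fin k → Bool,
    if walkEnd a (List.ofFn s) = b then walkWeight R a (List.ofFn s) else 0

/-- `Zwp R a b k`: the same generating function, restricted to walks staying at
heights `≥ a` ("positive walks"). -/
def Zwp (R : ℤ → A) (a b : ℤ) (k : ℕ) : A :=
  ∑ s : Fin k → Bool,
    if walkEnd a (List.ofFn s) = b ∧ walkAbove a a (List.ofFn s) = true then
      walkWeight R a (List.ofFn s)
    else 0

/-- `Pdim R a b k`: hard-dimer partition function on the segment `[a,b]`: the sum over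
`k`-element subsets `S` of `{a+1, …, b}` with no two consecutive elements of
`∏ i in S, R i` (a dimer on `[i-1,i]` carries weight `R i`). -/
noncomputable def Pdim (R : ℤ → A) (a b : ℤ) (k : ℕ) : A :=
  ∑ S ∈ Finset.powersetCard k (Finset.Icc (a + 1) b),
    if ∀ i ∈ S, i + 1 ∉ S then ∏ i ∈ S, R i else 0

/-- `Vp R g m a b = Σ_{k=1}^{m} g_k • Zw R a b (2k-1)`: grand-canonical generating
function for walks of odd length from `a` to `b`. -/
def Vp (R : ℤ → A) (g : ℕ → A) (m : ℕ) (a b : ℤ) : A :=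
  ∑ k ∈ Finset.Icc 1 m, g k * Zw R a b (2 * k - 1)

/-- The conserved quantities `Γ_{2i}(n)`; `Gam R g m i n` stands for `Γ_{2i}(n)`. -/
def Gam (R : ℤ → A) (g : ℕ → A) (m : ℕ) (i : ℕ) (n : ℤ) : A :=
  if i = 0 then R (n - 1) - Vp R g m (n - 1) (n - 2) + (if n = 0 then 1 else 0)
  else
    Zwp R (n - 1) (n - 1) (2 * i) *
        (R (n - 1) - Vp R g m (n - 1) (n - 2) + (if n = 0 then 1 else 0)) -
      ∑ j ∈ Finset.Icc 1 i,
        Zwp R (n - 1) (n - 1 + 2 * (j : ℤ)) (2 * i) * Vp R g m (n + 2 * (j : ℤ) - 1) (n - 2)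

/-- The symmetric conserved quantities `Γ̃_{2i}(n)`; `Gamt R g m i n` stands
for `Γ̃_{2i}(n)`. -/
def Gamt (R : ℤ → A) (g : ℕ → A) (m : ℕ) (i : ℕ) (n : ℤ) : A :=
  if i = 0 then R n - Vp R g m n (n - 1)
  else
    (Zw R n (n - 1) (2 * i - 1) - R (n - 1) * R (n + 1) * Zw R (n - 2) (n + 1) (2 * i - 1)) *
        (R n - Vp R g m n (n - 1)) -
      ∑ j ∈ Finset.Icc 1 i,
        (Zw R (n - (j : ℤ)) (n + (j : ℤ) - 1) (2 * i - 1) -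
            R (n - (j : ℤ) - 1) * R (n + (j : ℤ) + 1) *
              Zw R (n - (j : ℤ) - 2) (n + (j : ℤ) + 1) (2 * i - 1)) *
          Vp R g m (n + (j : ℤ)) (n - (j : ℤ) - 1)

/-- The master equation: `R i = 0` for `i < 0` and `R n = 1 + V'_{n,n-1}` for `n ≥ 0`. -/
def MasterEq (R : ℤ → A) (g : ℕ → A) (m : ℕ) : Prop :=
  (∀ i : ℤ, i < 0 → R i = 0) ∧ ∀ n : ℤ, 0 ≤ n → R n = 1 + Vp R g m n (n - 1)

/-- `Zodd R a b i = Zw R a b (2i-1)`, with the convention that for `i = 0`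
(walks of length `-1`) it equals `1` if `b = a - 1` and `0` otherwise. -/
def Zodd (R : ℤ → A) (a b : ℤ) (i : ℕ) : A :=
  if i = 0 then (if b = a - 1 then 1 else 0) else Zw R a b (2 * i - 1)

/-- Binomial coefficient with an integer lower index, with the convention that it
vanishes for negative lower index. -/
def Cz (n : ℕ) (p : ℤ) : ℤ := if 0 ≤ p then n.choose p.toNat else 0


/-!
The walks from `n - 1` back to `n - 1` of length at most `2j` never rise above `n + j - 1`, and
the only one that reaches `n - j - 1` goes straight down `j` steps and straight back up; its weight
is `∏_{ℓ=1}^{j} R_{n-ℓ}`. All other walks live in the strip `[n - j, n + j - 1]` of `2j`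
sites, where they are counted by the powers of the tridiagonal transfer matrix `J`.

The hard-dimer polynomial `p_{2j} = Σ_i (-1)^i Π_{n-j,n+j-1}(i) X^{2j-2i}` is a continuant: the
dimer polynomials `p_m` of the lowest `m` sites satisfy `p_{m+2} = p_{m+1} X - R p_m`, which is
also how `J` acts on unit rows. Hence `e₀ p_m(J) = e_m` for `m ≤ 2j`, and
`e_m p_{2j}(J) = e₀ p_{2j}(J) p_m(J) = 0`, so `p_{2j}(J) = 0` (Cayley–Hamilton without
determinants). Its diagonal entry at height `n - 1` is the alternating sum of the theorem minus
the weight of the escaping walk.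
-/

open Polynomial Matrix

theorem Zw_zero (R : ℤ → A) (x y : ℤ) : Zw R x y 0 = if x = y then 1 else 0 := by
  simp [Zw, walkEnd, walkWeight]

theorem Zw_succ (R : ℤ → A) (x y : ℤ) (k : ℕ) :
    Zw R x y (k + 1) = Zw R (x + 1) y k + R x * Zw R (x - 1) y k := by
  rw [Zw, ← (Fin.consEquiv fun _ => Bool).sum_comp, Fintype.sum_prod_type, Fintype.sum_bool]
  simp only [Fin.consEquiv_apply, List.ofFn_succ, Fin.cons_zero, Fin.cons_succ, walkEnd,
    walkWeight, Zw, mul_sum, mul_ite, mul_zero]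

theorem Zw_eq_zero_of_lt (R : ℤ → A) :
    ∀ (k : ℕ) (x y : ℤ), x + k < y ∨ y + k < x → Zw R x y k = 0
  | 0, x, y, h => by rw [Zw_zero, if_neg (by omega)]
  | k + 1, x, y, h => by
    rw [Zw_succ, Zw_eq_zero_of_lt R k _ _ (by omega), Zw_eq_zero_of_lt R k _ _ (by omega),
      mul_zero, add_zero]

theorem Zw_add_self (R : ℤ → A) : ∀ (k : ℕ) (x : ℤ), Zw R x (x + k) k = 1
  | 0, x => by simp [Zw_zero]
  | k + 1, x => by
    rw [Zw_succ, show x + (k + 1 : ℕ) = x + 1 + k by push_cast; ring, Zw_add_self R k,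
      Zw_eq_zero_of_lt R k _ _ (by omega), mul_zero, add_zero]

def dimerWeight (R : ℤ → A) (S : Finset ℤ) : A :=
  if ∀ i ∈ S, i + 1 ∉ S then ∏ i ∈ S, R i else 0

theorem Pdim_eq_sum_dimerWeight (R : ℤ → A) (a b : ℤ) (k : ℕ) :
    Pdim R a b k = ∑ S ∈ powersetCard k (Icc (a + 1) b), dimerWeight R S := rfl

theorem Pdim_zero (R : ℤ → A) (a b : ℤ) : Pdim R a b 0 = 1 := by
  simp [Pdim]

theorem dimerWeight_insert (R : ℤ → A) {b : ℤ} {S : Finset ℤ} (hS : ∀ i ∈ S, i ≤ b) :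
    dimerWeight R (insert (b + 1) S) = R (b + 1) * if b ∈ S then 0 else dimerWeight R S := by
  have hb : b + 1 ∉ S := fun h => by linarith [hS _ h]
  have hfree : (∀ i ∈ insert (b + 1) S, i + 1 ∉ insert (b + 1) S) ↔
      b ∉ S ∧ ∀ i ∈ S, i + 1 ∉ S := by
    simp only [mem_insert, forall_eq_or_imp, not_or, add_left_inj]
    refine ⟨fun h => ⟨fun hbS => (h.2 b hbS).1 rfl, fun i hi => (h.2 i hi).2⟩,
      fun h => ⟨⟨by omega, fun h' => by linarith [hS _ h']⟩,
        fun i hi => ⟨?_, h.2 i hi⟩⟩⟩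
    rintro rfl
    exact h.1 hi
  rw [dimerWeight, dimerWeight, prod_insert hb]
  simp only [hfree]
  by_cases hbS : b ∈ S <;> simp [hbS, mul_ite]

theorem sum_powersetCard_ite_mem {α M : Type*} [DecidableEq α] [AddCommMonoid M]
    (s : Finset α) (b : α) (k : ℕ) (f : Finset α → M) :
    ∑ S ∈ powersetCard k s, (if b ∈ S then 0 else f S) =
      ∑ S ∈ powersetCard k (s.erase b), f S := by
  rw [sum_ite, sum_const_zero, zero_add]
  congr 1
  ext S
  simp only [mem_filter, mem_powersetCard, subset_erase]
  tauto

theorem Pdim_succ_right (R : ℤ → A) {a b : ℤ} (hab : a ≤ b) (k : ℕ) :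
    Pdim R a (b + 1) (k + 1) = Pdim R a b (k + 1) + R (b + 1) * Pdim R a (b - 1) k := by
  have hb : b + 1 ∉ Icc (a + 1) b := by simp
  rw [Pdim_eq_sum_dimerWeight, ← insert_Icc_right_eq_Icc_add_one (by omega),
    powersetCard_succ_insert hb, sum_union, sum_image]
  · rw [Pdim_eq_sum_dimerWeight, Pdim_eq_sum_dimerWeight, Icc_sub_one_right_eq_Ico,
      ← Icc_erase_right, ← sum_powersetCard_ite_mem, mul_sum]
    congr 1
    refine sum_congr rfl fun S hS => dimerWeight_insert R fun i hi => ?_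
    exact (mem_Icc.1 ((mem_powersetCard.1 hS).1 hi)).2
  · intro S hS T hT hST
    have hnot : ∀ U ∈ powersetCard k (Icc (a + 1) b), b + 1 ∉ U :=
      fun U hU h => hb ((mem_powersetCard.1 hU).1 h)
    rw [← erase_insert (hnot S hS), ← erase_insert (hnot T hT)]
    exact congrArg (·.erase (b + 1)) hST
  · refine disjoint_left.2 fun S hS hS' => ?_
    obtain ⟨T, -, rfl⟩ := mem_image.1 hS'
    exact hb ((mem_powersetCard.1 hS).1 (mem_insert_self _ _))

theorem two_mul_card_le_of_forall_add_one_notMem {a b : ℤ} {S : Finset ℤ}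
    (hS : S ⊆ Icc (a + 1) b) (hfree : ∀ i ∈ S, i + 1 ∉ S) :
    2 * #S ≤ #(Icc (a + 1) (b + 1)) := by
  have hdisj : Disjoint S (S.map (addRightEmbedding 1)) :=
    disjoint_left.2 fun i hi hi' => by
      obtain ⟨i', hi'S, rfl⟩ := mem_map.1 hi'
      exact hfree i' hi'S hi
  have hsub : S ∪ S.map (addRightEmbedding 1) ⊆ Icc (a + 1) (b + 1) := by
    intro i hi
    rcases mem_union.1 hi with hi | hi
    · have := mem_Icc.1 (hS hi); exact mem_Icc.2 ⟨by omega, by omega⟩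
    · obtain ⟨i', hi'S, rfl⟩ := mem_map.1 hi
      have := mem_Icc.1 (hS hi'S); simp only [addRightEmbedding_apply, mem_Icc]; omega
  calc 2 * #S = #(S ∪ S.map (addRightEmbedding 1)) := by
        rw [card_union_of_disjoint hdisj, card_map, two_mul]
    _ ≤ _ := card_le_card hsub

theorem Pdim_eq_zero (R : ℤ → A) {a b : ℤ} {k : ℕ} (hk : (b + 1 - a).toNat < 2 * k) :
    Pdim R a b k = 0 := by
  refine sum_eq_zero fun S hS => if_neg fun hfree => ?_
  obtain ⟨hsub, rfl⟩ := mem_powersetCard.1 hS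
  have := two_mul_card_le_of_forall_add_one_notMem hsub hfree
  rw [Int.card_Icc] at this
  omega

section Jacobi

variable (c : ℕ → A)

/-- The transfer matrix of walks on `{0, …, N - 1}`: a step up has weight `1`, a step down from
`i` has weight `c i`. -/
def jacobi (N : ℕ) : Matrix (Fin N) (Fin N) A :=
  Matrix.of fun i i' =>
    (if (i' : ℕ) = i + 1 then 1 else 0) + if (i : ℕ) = i' + 1 then c i else 0

def unitRow (N m : ℕ) : Fin N → A := fun i => if (i : ℕ) = m then 1 else 0

noncomputable def continuant : ℕ → A[X]
  | 0 => 1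
  | 1 => X
  | m + 2 => continuant (m + 1) * X - c (m + 1) • continuant m

theorem unitRow_of_le {N m : ℕ} (h : N ≤ m) : (unitRow N m : Fin N → A) = 0 := by
  funext i
  exact if_neg (by omega)

theorem unitRow_vecMul {N m : ℕ} (h : m < N) (M : Matrix (Fin N) (Fin N) A) :
    unitRow N m ᵥ* M = M ⟨m, h⟩ := by
  funext i'
  have hm : ∀ i : Fin N, (i : ℕ) = m ↔ i = ⟨m, h⟩ := fun i => by simp [Fin.ext_iff]
  simp [Matrix.vecMul, dotProduct, unitRow, hm]

theorem unitRow_vecMul_jacobi_zero {N : ℕ} : unitRow N 0 ᵥ* jacobi c N = unitRow N 1 := by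
  rcases Nat.eq_zero_or_pos N with rfl | hN
  · exact Subsingleton.elim _ _
  rw [unitRow_vecMul hN]
  funext i'
  simp [jacobi, unitRow]

theorem unitRow_vecMul_jacobi_succ {N m : ℕ} (h : m + 1 < N) :
    unitRow N (m + 1) ᵥ* jacobi c N = unitRow N (m + 2) + c (m + 1) • unitRow N m := by
  rw [unitRow_vecMul h]
  funext i'
  simp [jacobi, unitRow, eq_comm]

theorem unitRow_zero_vecMul_aeval_continuant {N : ℕ} :
    ∀ m ≤ N, unitRow N 0 ᵥ* aeval (jacobi c N) (continuant c m) = unitRow N m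
  | 0, _ => by simp [continuant]
  | 1, _ => by simp [continuant, unitRow_vecMul_jacobi_zero]
  | m + 2, h => by
    rw [continuant, map_sub, map_mul, aeval_X, map_smul, vecMul_sub, ← vecMul_vecMul,
      vecMul_smul, unitRow_zero_vecMul_aeval_continuant (m + 1) (by omega),
      unitRow_zero_vecMul_aeval_continuant m (by omega), unitRow_vecMul_jacobi_succ c (by omega),
      add_sub_cancel_right]

theorem aeval_jacobi_continuant (N : ℕ) : aeval (jacobi c N) (continuant c N) = 0 := by
  have hrow : ∀ m < N, unitRow N m ᵥ* aeval (jacobi c N) (continuant c N) = 0 := by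
    intro m hm
    rw [← unitRow_zero_vecMul_aeval_continuant c m hm.le, vecMul_vecMul, ← map_mul, mul_comm,
      map_mul, ← vecMul_vecMul, unitRow_zero_vecMul_aeval_continuant c N le_rfl,
      unitRow_of_le le_rfl, zero_vecMul]
  ext p q
  simpa [unitRow_vecMul p.2] using congrFun (hrow p p.2) q

end Jacobi

theorem continuant_eq_sum_Pdim (R : ℤ → A) (lo : ℤ) : ∀ (m K : ℕ), m < 2 * K →
    continuant (fun t => R (lo + t)) m =
      ∑ i ∈ range K, ((-1) ^ i * Pdim R lo (lo + m - 1) i) • X ^ (m - 2 * i)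
  | m, 0, hK => by omega
  | 0, K + 1, _ | 1, K + 1, _ => by
    rw [sum_range_succ',
      sum_eq_zero fun i _ => by rw [Pdim_eq_zero R (by omega), mul_zero, zero_smul]]
    simp [continuant, Pdim_zero]
  | m + 2, K + 1, hK => by
    have hPdim (i : ℕ) : Pdim R lo (lo + (m + 2 : ℕ) - 1) (i + 1) =
        Pdim R lo (lo + (m + 1 : ℕ) - 1) (i + 1) +
          R (lo + (m + 1 : ℕ)) * Pdim R lo (lo + m - 1) i := by
      rw [show lo + ((m + 2 : ℕ) : ℤ) - 1 = lo + m + 1 by push_cast; ring,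
        show lo + ((m + 1 : ℕ) : ℤ) - 1 = lo + m by push_cast; ring,
        show lo + ((m + 1 : ℕ) : ℤ) = lo + m + 1 by push_cast; ring]
      exact Pdim_succ_right R (by omega) i
    rw [continuant, continuant_eq_sum_Pdim R lo (m + 1) (K + 1) (by omega),
      continuant_eq_sum_Pdim R lo m K (by omega), sum_range_succ', sum_range_succ', add_mul,
      sum_mul, smul_sum, add_sub_right_comm, ← sum_sub_distrib]
    congr 1
    · refine sum_congr rfl fun i _ => ?_
      rw [hPdim, show m + 2 - 2 * (i + 1) = m - 2 * i by omega, smul_mul_assoc]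
      rcases le_or_gt (2 * i + 1) m with h | h
      · rw [← pow_succ, show m + 1 - 2 * (i + 1) + 1 = m - 2 * i by omega]
        module
      · rw [Pdim_eq_zero R (k := i + 1) (by omega)]
        module
    · simp [Pdim_zero, ← pow_succ]

theorem sum_Pdim_smul_jacobi_pow_eq_zero (R : ℤ → A) (lo : ℤ) {m K : ℕ} (hK : m < 2 * K) :
    ∑ i ∈ range K,
        ((-1) ^ i * Pdim R lo (lo + m - 1) i) • jacobi (fun t => R (lo + t)) m ^ (m - 2 * i) =
      0 := by
  simpa [continuant_eq_sum_Pdim R lo m K hK, map_sum] using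
    aeval_jacobi_continuant (fun t => R (lo + t)) m

/-- Under these bounds the only walk leaving the strip `[lo, lo + N - 1]` is, when
`k = i + i' + 2`, the one going straight down to `lo - 1` and straight back up. -/
theorem Zw_eq_unitRow_vecMul_jacobi_pow (R : ℤ → A) (lo : ℤ) {N : ℕ} (i' : Fin N) :
    ∀ (k i : ℕ), k ≤ i + i' + 2 → i + i' + k < 2 * N →
      Zw R (lo + i) (lo + i') k =
        (unitRow N i ᵥ* jacobi (fun t => R (lo + t)) N ^ k) i' +
          if k = i + i' + 2 then ∏ h ∈ Icc lo (lo + i), R h else 0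
  | 0, i, _, _ => by
    simp [Zw_zero, unitRow, eq_comm]
  | k + 1, 0, hk, _ => by
    have hup := Zw_eq_unitRow_vecMul_jacobi_pow R lo i' k 1 (by omega) (by omega)
    have hdown : Zw R (lo - 1) (lo + i') k = if k + 1 = 0 + i' + 2 then 1 else 0 := by
      split_ifs with h
      · convert Zw_add_self R k (lo - 1) using 2; omega
      · exact Zw_eq_zero_of_lt R _ _ _ (by omega)
    rw [if_neg (by omega), add_zero, Nat.cast_one] at hup
    rw [Zw_succ, pow_succ', ← vecMul_vecMul, unitRow_vecMul_jacobi_zero, Nat.cast_zero, add_zero,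
      hup, hdown, Icc_self, prod_singleton, mul_ite, mul_one, mul_zero]
  | k + 1, i + 1, hk, htop => by
    by_cases hi : i + 1 < N
    · have hup := Zw_eq_unitRow_vecMul_jacobi_pow R lo i' k (i + 2) (by omega) (by omega)
      have hdown := Zw_eq_unitRow_vecMul_jacobi_pow R lo i' k i (by omega) (by omega)
      rw [if_neg (by omega), add_zero] at hup
      have hprod : ∏ h ∈ Icc lo (lo + (i + 1 : ℕ)), R h =
          R (lo + (i + 1 : ℕ)) * ∏ h ∈ Icc lo (lo + i), R h := by
        rw [Nat.cast_succ, ← add_assoc, ← insert_Icc_right_eq_Icc_add_one (by omega),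
          prod_insert (by simp)]
      rw [Zw_succ, pow_succ', ← vecMul_vecMul, unitRow_vecMul_jacobi_succ _ hi, add_vecMul,
        smul_vecMul, Pi.add_apply, Pi.smul_apply, smul_eq_mul, hprod,
        show lo + (i + 1 : ℕ) + 1 = lo + (i + 2 : ℕ) by push_cast; ring,
        show lo + (i + 1 : ℕ) - 1 = lo + i by push_cast; ring, hup, hdown]
      have hcorner : k + 1 = i + 1 + i' + 2 ↔ k = i + i' + 2 := by omega
      simp only [hcorner]
      simp only [mul_add, mul_ite, mul_zero, add_assoc]
    · rw [unitRow_of_le (by omega), zero_vecMul, Pi.zero_apply, zero_add, if_neg (by omega),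
        Zw_eq_zero_of_lt R _ _ _ (by omega)]

theorem Zw_sub_one_self_eq_jacobi_pow_apply (R : ℤ → A) (n : ℤ) {i j : ℕ} (hj : 1 ≤ j)
    (hi : i ≤ j) :
    Zw R (n - 1) (n - 1) (2 * j - 2 * i) =
      (jacobi (fun t => R (n - j + t)) (2 * j) ^ (2 * j - 2 * i))
          ⟨j - 1, by omega⟩ ⟨j - 1, by omega⟩ +
        if i = 0 then ∏ l ∈ Icc 1 j, R (n - l) else 0 := by
  have hwalk := Zw_eq_unitRow_vecMul_jacobi_pow R (n - j) (N := 2 * j) ⟨j - 1, by omega⟩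
    (2 * j - 2 * i) (j - 1) (by simp only; omega) (by simp only; omega)
  have hprod : ∏ h ∈ Icc (n - j) (n - 1), R h = ∏ l ∈ Icc 1 j, R (n - l) :=
    prod_nbij' (fun h => (n - h).toNat) (fun l => n - l)
      (fun h hh => by simp only [mem_Icc] at hh ⊢; omega)
      (fun l hl => by simp only [mem_Icc] at hl ⊢; omega)
      (fun h hh => by simp only [mem_Icc] at hh; omega)
      (fun l hl => by simp only [mem_Icc] at hl; omega)
      (fun h hh => by simp only [mem_Icc] at hh; congr; omega)
  have hcorner : 2 * j - 2 * i = j - 1 + (j - 1) + 2 ↔ i = 0 := by omega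
  rw [show n - j + ((j - 1 : ℕ) : ℤ) = n - 1 by omega, unitRow_vecMul (by omega), hprod]
    at hwalk
  simpa only [hcorner] using hwalk

/-- the inversion identity
`-∏_{ℓ=1}^{j} R_{n-ℓ} = Σ_{i=0}^{j} (-1)^{i-1} Π_{n-j,n+j-1}(i) Z_{n-1,n-1}(2j-2i)`. -/
theorem stmt_17 {A : Type*} [CommRing A] (R : ℤ → A) (n : ℤ) (j : ℕ) (hj : 1 ≤ j) :
    -∏ l ∈ Finset.Icc 1 j, R (n - (l : ℤ)) =
      ∑ i ∈ Finset.range (j + 1),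
        (-1 : A) ^ (i + 1) * Pdim R (n - (j : ℤ)) (n + (j : ℤ) - 1) i *
          Zw R (n - 1) (n - 1) (2 * j - 2 * i) := by
  set J := jacobi (fun t => R (n - j + t)) (2 * j)
  let p : Fin (2 * j) := ⟨j - 1, by omega⟩
  have hcayley := congrFun (congrFun (sum_Pdim_smul_jacobi_pow_eq_zero R (n - j)
    (show 2 * j < 2 * (j + 1) by omega)) p) p
  rw [show n - j + ((2 * j : ℕ) : ℤ) - 1 = n + j - 1 by push_cast; ring] at hcayley
  simp only [Matrix.sum_apply, Matrix.smul_apply, smul_eq_mul, Matrix.zero_apply] at hcayley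
  have hterm : ∀ i ∈ range (j + 1),
      (-1 : A) ^ (i + 1) * Pdim R (n - j) (n + j - 1) i * Zw R (n - 1) (n - 1) (2 * j - 2 * i) =
        -((-1) ^ i * Pdim R (n - j) (n + j - 1) i * (J ^ (2 * j - 2 * i)) p p) -
          (-1) ^ i * Pdim R (n - j) (n + j - 1) i *
            if i = 0 then ∏ l ∈ Icc 1 j, R (n - l) else 0 :=
    fun i hi => by
      rw [Zw_sub_one_self_eq_jacobi_pow_apply R n hj (Nat.lt_succ_iff.1 (mem_range.1 hi))]
      ring
  rw [sum_congr rfl hterm, sum_sub_distrib, sum_neg_distrib, hcayley]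
  simp [Pdim_zero]
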